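/- arXiv:2603.05875 — 2 statements merged into one kernel-verified Lean document; each statement's English description precedes it below -/
import Mathlib

section
/- Every graded poset admitting a dual EL-labeling admits a recursive coatom ordering. -/
section Posets

variable {P : Type*} [PartialOrder P]

/-- `a` covers `b` within the subposet `Q`. -/
def covIn (Q : Set P) (a b : P) : Prop :=
  a ∈ Q ∧ b ∈ Q ∧ b < a ∧ ∀ z ∈ Q, ¬ (b < z ∧ z < a)

/-- `l` is a maximal (saturated) chain in `Q`, listed from its top `a` down to its bottom `b`,
consecutive entries being covering relations inside `Q`. -/
def MaxChainIn (Q : Set P) (a b : P) (l : List P) : Prop :=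
  (∀ x ∈ l, x ∈ Q) ∧ l.Chain' (fun x y => covIn Q x y) ∧
    l.head? = some a ∧ l.getLast? = some b

def hasMinEl (Q : Set P) (m : P) : Prop := m ∈ Q ∧ ∀ z ∈ Q, m ≤ z

def hasMaxEl (Q : Set P) (M : P) : Prop := M ∈ Q ∧ ∀ z ∈ Q, z ≤ M

def IsMaximalIn (Q : Set P) (x : P) : Prop := x ∈ Q ∧ ∀ z ∈ Q, x ≤ z → z = x

/-- In the subposet `Q` with minimal element `m`, the element `z` has length `N`:
some maximal chain of `{y ∈ Q | y ≤ z}` from `z` down to `m` exists and every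
such chain has `N` covering steps (hence `N+1` entries). -/
def lengthEq (Q : Set P) (m z : P) (N : ℕ) : Prop :=
  (∃ l, MaxChainIn {y | y ∈ Q ∧ y ≤ z} z m l) ∧
    ∀ l, MaxChainIn {y | y ∈ Q ∧ y ≤ z} z m l → l.length = N + 1

/-- Görtz's recursive notion of an `N`-Cohen-Macaulay (pure, with unique minimal element) poset. -/
def IsCM : ℕ → Set P → Prop
  | 0, Q => ∃ m, hasMinEl Q m ∧ ∃ x, IsMaximalIn Q x ∧ (∀ y, IsMaximalIn Q y → y = x) ∧
      lengthEq Q m x 0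
  | (N+1), Q => ∃ m, hasMinEl Q m ∧
      ((∃ x, IsMaximalIn Q x ∧ (∀ y, IsMaximalIn Q y → y = x) ∧ lengthEq Q m x (N+1)) ∨
       (∃ k, 2 ≤ k ∧ ∃ x : Fin k → P, Function.Injective x ∧
          (∀ i, IsMaximalIn Q (x i)) ∧ (∀ y, IsMaximalIn Q y → ∃ i, x i = y) ∧
          (∀ i, lengthEq Q m (x i) (N+1)) ∧
          ∀ j : Fin k, 0 < (j : ℕ) →
            IsCM N ({y | y ∈ Q ∧ y ≤ x j} ∩
              {y | ∃ i : Fin k, (i : ℕ) < (j : ℕ) ∧ y ∈ Q ∧ y ≤ x i})))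

variable {Λ : Type*} [LinearOrder Λ]

/-- The word of edge labels of a chain (read from top to bottom). -/
def labelsOf (η : P → P → Λ) (l : List P) : List Λ :=
  (l.zip l.tail).map fun p => η p.1 p.2

/-- A dual EL-labeling: every interval has a unique label-increasing maximal chain,
which is moreover lexicographically smallest among all maximal chains of the interval. -/
def IsDualEL (η : P → P → Λ) : Prop :=
  ∀ w w' : P, w ≤ w' →
    ∃ l, MaxChainIn {y | w ≤ y ∧ y ≤ w'} w' w l ∧ (labelsOf η l).Chain' (· ≤ ·) ∧
      (∀ l', MaxChainIn {y | w ≤ y ∧ y ≤ w'} w' w l' →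
        (labelsOf η l').Chain' (· ≤ ·) → l' = l) ∧
      (∀ l', MaxChainIn {y | w ≤ y ∧ y ≤ w'} w' w l' → l' ≠ l →
        List.Lex (· < ·) (labelsOf η l) (labelsOf η l'))

end Posets

/-- `RCO N Q A` : the graded subposet `Q`, of length `N`, admits a recursive coatom ordering
in which exactly the coatoms belonging to `A` come first. -/
def RCO {P : Type*} [PartialOrder P] : ℕ → Set P → Set P → Prop
  | 0, _, _ => True
  | 1, _, _ => True
  | (N+2), Q, A =>
      ∃ M, hasMaxEl Q M ∧ ∃ t, ∃ x : Fin t → P, Function.Injective x ∧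
        (∀ i, covIn Q M (x i)) ∧ (∀ y, covIn Q M y → ∃ i, x i = y) ∧
        (∃ s : ℕ, ∀ i : Fin t, x i ∈ A ↔ (i : ℕ) < s) ∧
        (∀ j : Fin t, RCO (N+1) {y | y ∈ Q ∧ y ≤ x j}
            {y | covIn {z | z ∈ Q ∧ z ≤ x j} (x j) y ∧
                 ∃ i : Fin t, (i : ℕ) < (j : ℕ) ∧ covIn Q (x i) y}) ∧
        (∀ (i j : Fin t) (w : P), (i : ℕ) < (j : ℕ) → w ∈ Q → w < x i → w < x j →
            ∃ (k : Fin t) (w' : P), (k : ℕ) < (j : ℕ) ∧ w ≤ w' ∧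
              covIn Q (x k) w' ∧ covIn Q (x j) w')

/-!
Order the coatoms of `z` by the label of the edge leaving `z`. Comparing the unique increasing
chain of an interval `[w, z]` lexicographically with the chains through other coatoms shows
that a coatom `w` of `x ⋖ z` lies below an earlier coatom of `z` exactly when `η x w < η z x`.
So in `[⊥, x]` the coatoms below earlier ones are again those of small label, the same ordering
works recursively, and condition (ii) is witnessed by the first step of the increasing chain
from `x` down to `w`.
-/

section Chains

variable {P : Type*} [PartialOrder P] {S : Set P} {a b c x : P} {l l₁ l₂ : List P}

def SatChain (a b : P) (l : List P) : Prop :=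
  l.IsChain (fun x y => y ⋖ x) ∧ l.head? = some a ∧ l.getLast? = some b

lemma covIn_iff_covBy (hS : S.OrdConnected) : covIn S a b ↔ a ∈ S ∧ b ∈ S ∧ b ⋖ a :=
  ⟨fun ⟨ha, hb, hba, hmid⟩ => ⟨ha, hb, hba, fun c hbc hca =>
      hmid c (hS.out hb ha ⟨hbc.le, hca.le⟩) ⟨hbc, hca⟩⟩,
    fun ⟨ha, hb, hba⟩ => ⟨ha, hb, hba.lt, fun _ _ h => hba.2 h.1 h.2⟩⟩

lemma covIn_setOf_le_iff {z : P} : covIn {y | y ≤ z} a b ↔ a ≤ z ∧ b ⋖ a :=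
  (covIn_iff_covBy (S := {y | y ≤ z}) Set.ordConnected_Iic).trans
    ⟨fun h => ⟨h.1, h.2.2⟩, fun h => ⟨h.1, h.2.le.trans h.1, h.2⟩⟩

namespace SatChain

lemma singleton (a : P) : SatChain a a [a] := ⟨List.isChain_singleton a, rfl, rfl⟩

lemma cons (h : SatChain b c l) (hba : b ⋖ a) : SatChain a c (a :: l) := by
  obtain ⟨hl, hhead, hlast⟩ := h
  obtain ⟨t, rfl⟩ := List.head?_eq_some_iff.1 hhead
  exact ⟨List.isChain_cons_cons.2 ⟨hba, hl⟩, rfl, by rwa [List.getLast?_cons_cons]⟩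

lemma pair (hba : b ⋖ a) : SatChain a b [a, b] := (singleton b).cons hba

lemma mem_Icc (h : SatChain a b l) (hx : x ∈ l) : x ∈ Set.Icc b a := by
  have hl : l.Pairwise (· ≥ ·) := (h.1.imp fun _ _ h => h.le).pairwise
  obtain ⟨t, rfl⟩ := List.head?_eq_some_iff.1 h.2.1
  obtain ⟨s, hs⟩ := List.getLast?_eq_some_iff.1 h.2.2
  refine ⟨?_, ?_⟩
  · rw [hs] at hl hx
    rcases List.mem_append.1 hx with hx | hx
    · exact (List.pairwise_append.1 hl).2.2 x hx b (List.mem_singleton_self b)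
    · exact (List.mem_singleton.1 hx).ge
  · rcases List.mem_cons.1 hx with rfl | hx
    · exact le_rfl
    · exact List.rel_of_pairwise_cons hl hx

lemma append (h₁ : SatChain a b l₁) (h₂ : SatChain b c l₂) :
    SatChain a c (l₁ ++ l₂.tail) := by
  obtain ⟨t, rfl⟩ := List.head?_eq_some_iff.1 h₂.2.1
  refine ⟨h₁.1.append (List.isChain_cons.1 h₂.1).2 fun x hx y hy => ?_, ?_, ?_⟩
  · have hxb : b = x := by simpa [h₁.2.2] using hx
    subst hxb
    exact (List.isChain_cons.1 h₂.1).1 y hy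
  · simp [List.head?_append, h₁.2.1]
  · rcases eq_or_ne t [] with rfl | ht
    · obtain rfl : b = c := by simpa using h₂.2.2
      simpa using h₁.2.2
    · rw [List.tail_cons, List.getLast?_append_of_ne_nil _ ht, ← h₂.2.2,
        ← List.getLast?_append_of_ne_nil [b] ht]
      rfl

lemma exists_eq_cons_cons (h : SatChain a b l) (hba : b ≠ a) : ∃ u t, l = a :: u :: t := by
  obtain ⟨_ | ⟨u, t⟩, rfl⟩ := List.head?_eq_some_iff.1 h.2.1
  · exact absurd (by simpa using h.2.2.symm) hba
  · exact ⟨u, t, rfl⟩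

end SatChain

lemma exists_satChain [WellFoundedLT P] [IsStronglyCoatomic P] (h : b ≤ a) :
    ∃ l, SatChain a b l := by
  induction a using WellFoundedLT.induction with
  | _ a ih =>
    rcases h.eq_or_lt with rfl | hlt
    · exact ⟨_, SatChain.singleton b⟩
    · obtain ⟨x, hbx, hxa⟩ := exists_le_covBy_of_lt hlt
      obtain ⟨l, hl⟩ := ih x hxa.lt hbx
      exact ⟨_, hl.cons hxa⟩

lemma maxChainIn_iff_satChain (hS : S.OrdConnected) (ha : a ∈ S) (hb : b ∈ S) :
    MaxChainIn S a b l ↔ SatChain a b l := by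
  refine ⟨fun ⟨_, hl, hhead, hlast⟩ =>
    ⟨hl.imp fun _ _ h => ((covIn_iff_covBy hS).1 h).2.2, hhead, hlast⟩, fun h => ?_⟩
  have hmem : ∀ x ∈ l, x ∈ S := fun x hx => hS.out hb ha (h.mem_Icc hx)
  exact ⟨hmem, (List.IsChain.iff_mem.1 h.1).imp fun x y ⟨hx, hy, hxy⟩ =>
    (covIn_iff_covBy hS).2 ⟨hmem x hx, hmem y hy, hxy⟩, h.2⟩

end Chains

section Rank

variable {P : Type*} [PartialOrder P] [OrderBot P] {w x z : P} {m n : ℕ} {l : List P}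

def RankEq (z : P) (n : ℕ) : Prop := ∀ l, SatChain z ⊥ l → l.length = n + 1

lemma RankEq.of_lengthEq (h : lengthEq Set.univ ⊥ z n) : RankEq z n := fun l hl =>
  h.2 l ((maxChainIn_iff_satChain (Set.ordConnected_univ.inter Set.ordConnected_Iic)
    ⟨trivial, le_rfl⟩ ⟨trivial, bot_le⟩).2 hl)

lemma RankEq.of_covBy (h : RankEq z (n + 1)) (hxz : x ⋖ z) : RankEq x n := fun l hl => by
  simpa using h _ (hl.cons hxz)

lemma RankEq.length_satChain [WellFoundedLT P] [IsStronglyCoatomic P] (hz : RankEq z m)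
    (hw : RankEq w n) (hl : SatChain z w l) : l.length + n = m + 1 := by
  obtain ⟨d, hd⟩ := exists_satChain (bot_le : ⊥ ≤ w)
  have hlen := hz _ (hl.append hd)
  have hd_ne : d ≠ [] := by rintro rfl; simp [SatChain] at hd
  have := hw d hd
  rw [List.length_append, List.length_tail] at hlen
  have := List.length_pos_of_ne_nil hd_ne
  omega

end Rank

section Labels

variable {P Λ : Type*} {η : P → P → Λ} {a b c : P} {l : List P}

@[simp]
lemma labelsOf_cons_cons : labelsOf η (a :: b :: l) = η a b :: labelsOf η (b :: l) := rfl

def LabelIncreasing [LE Λ] (η : P → P → Λ) (l : List P) : Prop := (labelsOf η l).IsChain (· ≤ ·)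

lemma labelIncreasing_cons_cons_cons [LE Λ] :
    LabelIncreasing η (a :: b :: c :: l) ↔ η a b ≤ η b c ∧ LabelIncreasing η (b :: c :: l) :=
  List.isChain_cons_cons

end Labels

section DualEL

variable {P : Type*} [PartialOrder P] {Λ : Type*} [LinearOrder Λ] {η : P → P → Λ}
  {u w x y z : P} {t : List P}

lemma IsDualEL.exists_increasing_satChain (hEL : IsDualEL η) (hwz : w ≤ z) :
    ∃ c, SatChain z w c ∧ LabelIncreasing η c ∧
      (∀ l, SatChain z w l → LabelIncreasing η l → l = c) ∧
      (∀ l, SatChain z w l → l ≠ c → List.Lex (· < ·) (labelsOf η c) (labelsOf η l)) := by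
  have hiff (l : List P) := maxChainIn_iff_satChain (l := l) Set.ordConnected_Icc
    ⟨hwz, le_rfl⟩ ⟨le_rfl, hwz⟩
  obtain ⟨c, hc, hinc, huniq, hlex⟩ := hEL w z hwz
  exact ⟨c, (hiff c).1 hc, hinc, fun l hl => huniq l ((hiff l).2 hl),
    fun l hl => hlex l ((hiff l).2 hl)⟩

theorem IsDualEL.label_lt_of_increasing (hEL : IsDualEL η) (hxz : x ⋖ z)
    (hl : SatChain x w (x :: u :: t)) (hinc : LabelIncreasing η (z :: x :: u :: t))
    (hyz : y ⋖ z) (hwy : w < y) (hyx : y ≠ x) : η z x < η z y := by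
  by_contra! hle
  obtain ⟨c, -, -, huniq, hlex⟩ := hEL.exists_increasing_satChain (hwy.le.trans hyz.le)
  obtain rfl := huniq _ (hl.cons hxz) hinc
  obtain ⟨l', hl', hl'inc, -, -⟩ := hEL.exists_increasing_satChain hwy.le
  obtain ⟨v, s, rfl⟩ := hl'.exists_eq_cons_cons hwy.ne
  have hne : z :: y :: v :: s ≠ z :: x :: u :: t := by simp [hyx]
  -- `z :: y :: v :: s` is not the increasing chain, so it descends at `y`, and being
  -- lexicographically larger it gives `η z y ≤ η z x ≤ η x u ≤ η y v < η z y`.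
  have hdrop : η y v < η z y := by
    by_contra! h
    exact hne (huniq _ (hl'.cons hyz) (labelIncreasing_cons_cons_cons.2 ⟨h, hl'inc⟩))
  have hrise : η z x ≤ η x u := (labelIncreasing_cons_cons_cons.1 hinc).1
  have hsecond : η x u ≤ η y v := by
    have hlt : labelsOf η (z :: x :: u :: t) < labelsOf η (z :: y :: v :: s) :=
      hlex _ (hl'.cons hyz) hne
    simp only [labelsOf_cons_cons, List.cons_lt_cons_iff] at hlt
    rcases hlt with h | ⟨-, h | ⟨h, -⟩⟩
    exacts [absurd h hle.not_gt, h.le, h.le]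
  exact absurd hdrop (hle.trans (hrise.trans hsecond)).not_gt

theorem IsDualEL.exists_covBy_label_lt_of_descent (hEL : IsDualEL η) (hxz : x ⋖ z)
    (hwx : w ⋖ x) (hdesc : η x w < η z x) (hlen : ∀ l, SatChain z w l → l.length = 3) :
    ∃ u, u ⋖ z ∧ w ⋖ u ∧ η z u < η z x := by
  obtain ⟨c, hc, hinc, -, -⟩ := hEL.exists_increasing_satChain (hwx.le.trans hxz.le)
  obtain ⟨a, u, b, rfl⟩ := List.length_eq_three.1 (hlen c hc)
  obtain ⟨hch, ha, hb⟩ := hc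
  obtain rfl : z = a := by simpa using ha.symm
  obtain rfl : w = b := by simpa using hb.symm
  have huz : u ⋖ z := (List.isChain_cons_cons.1 hch).1
  have hwu : w ⋖ u := (List.isChain_cons_cons.1 (List.isChain_cons_cons.1 hch).2).1
  refine ⟨u, huz, hwu, ?_⟩
  rcases eq_or_ne x u with rfl | hxu
  · exact absurd hdesc (labelIncreasing_cons_cons_cons.1 hinc).1.not_gt
  · exact hEL.label_lt_of_increasing huz (SatChain.pair hwu) hinc hxz hwx.lt hxu

theorem IsDualEL.exists_descent_of_label_le (hEL : IsDualEL η) (hxz : x ⋖ z) (hyz : y ⋖ z)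
    (hyx : y ≠ x) (hle : η z y ≤ η z x) (hwx : w < x) (hwy : w < y) :
    ∃ u, w ≤ u ∧ u ⋖ x ∧ η x u < η z x := by
  obtain ⟨l, hl, hinc, -, -⟩ := hEL.exists_increasing_satChain hwx.le
  obtain ⟨u, t, rfl⟩ := hl.exists_eq_cons_cons hwx.ne
  refine ⟨u, (hl.mem_Icc (by simp)).1, (List.isChain_cons_cons.1 hl.1).1, ?_⟩
  by_contra! hrise
  exact (hEL.label_lt_of_increasing hxz hl (labelIncreasing_cons_cons_cons.2 ⟨hrise, hinc⟩)
    hyz hwy hyx).not_ge hle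

end DualEL

theorem Set.exists_injective_monotone_enumeration {α β : Type*} [LinearOrder β] (s : Set α)
    [Finite s] (f : α → β) :
    ∃ (t : ℕ) (x : Fin t → α), Function.Injective x ∧ Set.range x = s ∧ Monotone (f ∘ x) := by
  set e := (Finite.equivFin s).symm
  set σ := Tuple.sort fun i => f (e i)
  refine ⟨_, fun i => e (σ i), Subtype.val_injective.comp (e.injective.comp σ.injective), ?_,
    Tuple.monotone_sort fun i => f (e i)⟩
  ext a
  refine ⟨?_, fun ha => ⟨σ.symm (e.symm ⟨a, ha⟩), by simp only [Equiv.apply_symm_apply]⟩⟩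
  rintro ⟨i, rfl⟩
  exact (e (σ i)).2

theorem IsLowerSet.exists_mem_iff_val_lt {t : ℕ} {s : Set (Fin t)} (hs : IsLowerSet s) :
    ∃ n : ℕ, ∀ i : Fin t, i ∈ s ↔ (i : ℕ) < n := by
  rcases hs.eq_univ_or_Iio with rfl | ⟨a, rfl⟩
  · exact ⟨t, fun i => by simp⟩
  · exact ⟨a, fun _ => Fin.lt_def⟩

section RecursiveCoatomOrdering

variable {P : Type*} [PartialOrder P] {Λ : Type*} [LinearOrder Λ] {η : P → P → Λ}

-- `c = ⊥` allows the empty cut.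
def IsLabelCut (η : P → P → Λ) (z : P) (A : Set P) : Prop :=
  ∃ c : WithBot Λ, ∀ w, w ⋖ z → (w ∈ A ↔ (η z w : WithBot Λ) < c)

def IsSortedCoatomEnum (η : P → P → Λ) (z : P) {t : ℕ} (x : Fin t → P) : Prop :=
  Function.Injective x ∧ Set.range x = {y | y ⋖ z} ∧ Monotone (η z ∘ x)

namespace IsSortedCoatomEnum

variable {z w y : P} {t : ℕ} {x : Fin t → P} {i j : Fin t}

lemma covBy (hx : IsSortedCoatomEnum η z x) (i : Fin t) : x i ⋖ z := by
  have hmem := Set.mem_range_self (f := x) i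
  rw [hx.2.1] at hmem
  exact hmem

lemma exists_eq (hx : IsSortedCoatomEnum η z x) (hy : y ⋖ z) : ∃ i, x i = y := by
  rw [← Set.mem_range, hx.2.1]
  exact hy

lemma exists_descent_of_lt (hx : IsSortedCoatomEnum η z x) (hEL : IsDualEL η) (hij : i < j)
    (hwi : w < x i) (hwj : w < x j) : ∃ u, w ≤ u ∧ u ⋖ x j ∧ η (x j) u < η z (x j) :=
  hEL.exists_descent_of_label_le (hx.covBy j) (hx.covBy i) (hx.1.ne hij.ne) (hx.2.2 hij.le)
    hwj hwi

lemma exists_lt_covBy_of_descent [OrderBot P] [WellFoundedLT P] [IsStronglyCoatomic P]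
    (hx : IsSortedCoatomEnum η z x) (hEL : IsDualEL η) {n : ℕ} (hz : RankEq z (n + 2))
    (hw : w ⋖ x j) (hdesc : η (x j) w < η z (x j)) : ∃ i < j, w ⋖ x i := by
  have hlen (l : List P) (hl : SatChain z w l) : l.length = 3 := by
    have := hz.length_satChain ((hz.of_covBy (hx.covBy j)).of_covBy hw) hl
    omega
  obtain ⟨u, huz, hwu, hlt⟩ := hEL.exists_covBy_label_lt_of_descent (hx.covBy j) hw hdesc hlen
  obtain ⟨i, rfl⟩ := hx.exists_eq huz
  exact ⟨i, hx.2.2.reflect_lt hlt, hwu⟩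

end IsSortedCoatomEnum

variable [Finite P] [OrderBot P]

theorem IsDualEL.rco_setOf_le_add_two (hEL : IsDualEL η) {n : ℕ} {z : P} {A : Set P}
    (hz : RankEq z (n + 2)) (hA : IsLabelCut η z A)
    (ih : ∀ x, x ⋖ z → ∀ B : Set P, IsLabelCut η x B → RCO (n + 1) {y | y ≤ x} B) :
    RCO (n + 2) {y | y ≤ z} A := by
  obtain ⟨t, x, hx⟩ : ∃ t, ∃ x : Fin t → P, IsSortedCoatomEnum η z x :=
    Set.exists_injective_monotone_enumeration {y | y ⋖ z} (η z)
  obtain ⟨c, hc⟩ := hA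
  refine ⟨z, ⟨le_rfl, fun _ h => h⟩, t, x, hx.1,
    fun i => covIn_setOf_le_iff.2 ⟨le_rfl, hx.covBy i⟩,
    fun y hy => hx.exists_eq (covIn_setOf_le_iff.1 hy).2, ?_, fun j => ?_, ?_⟩
  · refine IsLowerSet.exists_mem_iff_val_lt (s := {i | x i ∈ A}) fun j i hij hj => ?_
    exact (hc _ (hx.covBy i)).2
      ((WithBot.coe_le_coe.2 (hx.2.2 hij)).trans_lt ((hc _ (hx.covBy j)).1 hj))
  · have hset : {y | y ∈ {y | y ≤ z} ∧ y ≤ x j} = {y | y ≤ x j} :=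
      Set.ext fun y => ⟨And.right, fun h => ⟨h.trans (hx.covBy j).le, h⟩⟩
    rw [hset]
    refine ih (x j) (hx.covBy j) _ ⟨η z (x j), fun w hw => ?_⟩
    simp only [Set.mem_ofPred_eq, covIn_setOf_le_iff, WithBot.coe_lt_coe]
    constructor
    · rintro ⟨-, i, hij, -, hwi⟩
      obtain ⟨u, hwu, hux, hlt⟩ := hx.exists_descent_of_lt hEL hij hwi.lt hw.lt
      obtain rfl : u = w := (hw.eq_or_eq hwu hux.le).resolve_right hux.ne
      exact hlt
    · intro hdesc
      obtain ⟨i, hij, hwi⟩ := hx.exists_lt_covBy_of_descent hEL hz hw hdesc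
      exact ⟨⟨le_rfl, hw⟩, i, hij, (hx.covBy i).le, hwi⟩
  · intro i j w hij _ hwi hwj
    obtain ⟨u, hwu, hux, hlt⟩ := hx.exists_descent_of_lt hEL hij hwi hwj
    obtain ⟨k, hkj, huk⟩ := hx.exists_lt_covBy_of_descent hEL hz hux hlt
    exact ⟨k, u, hkj, hwu, covIn_setOf_le_iff.2 ⟨(hx.covBy k).le, huk⟩,
      covIn_setOf_le_iff.2 ⟨(hx.covBy j).le, hux⟩⟩

theorem IsDualEL.rco_setOf_le (hEL : IsDualEL η) (n : ℕ) :
    ∀ (z : P) (A : Set P), RankEq z n → IsLabelCut η z A → RCO n {y | y ≤ z} A := by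
  induction n with
  | zero => exact fun _ _ _ _ => trivial
  | succ n ih =>
    cases n with
    | zero => exact fun _ _ _ _ => trivial
    | succ n =>
      exact fun z A hz hA => hEL.rco_setOf_le_add_two hz hA fun x hxz B hB =>
        ih x B (hz.of_covBy hxz) hB

end RecursiveCoatomOrdering

/-- Every graded poset admitting a dual EL-labeling admits a
recursive coatom ordering. -/
theorem dualEL_implies_recursiveCoatomOrdering {P : Type*} [PartialOrder P] [Fintype P]
    [BoundedOrder P] {Λ : Type*} [LinearOrder Λ] (N : ℕ)
    (hgraded : lengthEq (Set.univ : Set P) ⊥ ⊤ N)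
    (η : P → P → Λ) (hEL : IsDualEL η) :
    RCO N (Set.univ : Set P) ∅ := by
  simpa using hEL.rco_setOf_le N ⊤ ∅ (.of_lengthEq hgraded) ⟨⊥, fun w _ => by simp⟩
end

section
/- Let (W, S) be a Coxeter group, J ⊆ S, and u₁ < u₂ in Bruhat order with u₁ ∉ W_J u₂. Then there exists u' with u₁ ≤ u' ⋖ u₂ (a cocover of u₂) such that u' ∉ W_J u₂. -/
/-- Bruhat order on a Coxeter group: generated by length-increasing right multiplication
by reflections. -/
noncomputable def coxBruhatLe {B : Type*} {W : Type*} [Group W] {M : CoxeterMatrix B}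
    (cs : CoxeterSystem M W) (u v : W) : Prop :=
  Relation.ReflTransGen
    (fun a b => ∃ t, cs.IsReflection t ∧ b = a * t ∧ cs.length a < cs.length b) u v

/-- `v` covers `u` in the Bruhat order. -/
noncomputable def coxCovBy {B : Type*} {W : Type*} [Group W] {M : CoxeterMatrix B}
    (cs : CoxeterSystem M W) (u v : W) : Prop :=
  coxBruhatLe cs u v ∧ cs.length v = cs.length u + 1

namespace CoxProof

open CoxeterSystem List
open scoped Classical

variable {B : Type*} {W : Type*} [Group W] {M : CoxeterMatrix B} (cs : CoxeterSystem M W)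

local prefix:100 "σ" => cs.simple
local prefix:100 "π" => cs.wordProd
local prefix:100 "ℓ" => cs.length

lemma conj_eq_iff (q x y : W) : q * x * q⁻¹ = y ↔ x = q⁻¹ * y * q := by
  constructor
  · intro h; rw [← h]; group
  · intro h; rw [h]; group

lemma simple_conj_eq_iff (i : B) (x y : W) : σ i * x * σ i = y ↔ x = σ i * y * σ i := by
  have h := conj_eq_iff (σ i) x y
  rwa [cs.inv_simple] at h

/-- the reflection representation map on `W × ℤˣ` -/
noncomputable def pmap (i : B) : (W × ℤˣ) → (W × ℤˣ) :=
  fun x => (σ i * x.1 * σ i, if x.1 = σ i then -x.2 else x.2)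

lemma pmap_invol (i : B) : Function.Involutive (pmap cs i) := by
  intro ⟨t, ε⟩
  simp only [pmap]
  have h1 : σ i * (σ i * t * σ i) * σ i = t := by
    have : σ i * (σ i * t * σ i) * σ i = (σ i * σ i) * t * (σ i * σ i) := by group
    rw [this, cs.simple_mul_simple_self, one_mul, mul_one]
  have h2 : (σ i * t * σ i = σ i) ↔ (t = σ i) := by
    rw [simple_conj_eq_iff]
    constructor
    · intro h; rw [h, cs.simple_mul_simple_self, one_mul]
    · intro h; rw [h, cs.simple_mul_simple_self, one_mul]
  by_cases h : t = σ i <;> simp [h, h1, h2]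

noncomputable def pperm (i : B) : Equiv.Perm (W × ℤˣ) := (pmap_invol cs i).toPerm

lemma pperm_apply (i : B) (t : W) (ε : ℤˣ) :
    pperm cs i (t, ε) = (σ i * t * σ i, if t = σ i then -ε else ε) := rfl

lemma sj_pow_comm (i j : B) (k : ℕ) :
    σ j * (σ i * σ j) ^ k = ((σ i * σ j)⁻¹) ^ k * σ j := by
  induction k with
  | zero => simp
  | succ n ih =>
    have key : σ j * (σ i * σ j) = (σ i * σ j)⁻¹ * σ j := by
      rw [mul_inv_rev, cs.inv_simple, cs.inv_simple]
      have : σ j * (σ i * σ j) = σ j * σ i * σ j := by group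
      rw [this]
    calc σ j * (σ i * σ j) ^ (n + 1) = (σ j * (σ i * σ j)) * (σ i * σ j) ^ n := by
          rw [pow_succ', ← mul_assoc]
      _ = (σ i * σ j)⁻¹ * (σ j * (σ i * σ j) ^ n) := by rw [key]; group
      _ = (σ i * σ j)⁻¹ * (((σ i * σ j)⁻¹) ^ n * σ j) := by rw [ih]
      _ = ((σ i * σ j)⁻¹) ^ (n + 1) * σ j := by rw [pow_succ', mul_assoc]

lemma pperm_step (i j : B) (u : W) (δ : ℤˣ) :
    (pperm cs i * pperm cs j) (u, δ) =
      ((σ i * σ j) * u * (σ i * σ j)⁻¹,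
        ((if u = σ j then (-1 : ℤˣ) else 1) *
         (if u = σ j * σ i * σ j then (-1 : ℤˣ) else 1)) * δ) := by
  have happ : (pperm cs i * pperm cs j) (u, δ) = pperm cs i (pperm cs j (u, δ)) := rfl
  rw [happ, pperm_apply, pperm_apply]
  have hcond : (σ j * u * σ j = σ i) ↔ (u = σ j * σ i * σ j) := by
    rw [simple_conj_eq_iff]
  have hfst : σ i * (σ j * u * σ j) * σ i = (σ i * σ j) * u * (σ i * σ j)⁻¹ := by
    rw [mul_inv_rev, cs.inv_simple, cs.inv_simple]; group
  rw [Prod.mk.injEq]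
  refine ⟨hfst, ?_⟩
  simp only [hcond]
  by_cases h1 : u = σ j <;> by_cases h2 : u = σ j * σ i * σ j <;> simp [h1, h2] <;> ring

lemma conj_pow_sj (i j : B) (n : ℕ) :
    ((σ i * σ j) ^ n)⁻¹ * σ j * (σ i * σ j) ^ n = ((σ i * σ j)⁻¹) ^ (2 * n) * σ j := by
  have e1 : ((σ i * σ j) ^ n)⁻¹ * σ j * (σ i * σ j) ^ n
      = ((σ i * σ j)⁻¹) ^ n * (σ j * (σ i * σ j) ^ n) := by
    rw [← inv_pow, mul_assoc]
  rw [e1, sj_pow_comm cs i j n, ← mul_assoc, ← pow_add, two_mul]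

lemma conj_pow_sjsisj (i j : B) (n : ℕ) :
    ((σ i * σ j) ^ n)⁻¹ * (σ j * σ i * σ j) * (σ i * σ j) ^ n
      = ((σ i * σ j)⁻¹) ^ (2 * n + 1) * σ j := by
  have hsis : σ j * σ i * σ j = (σ i * σ j)⁻¹ * σ j := by
    rw [mul_inv_rev, cs.inv_simple, cs.inv_simple, mul_assoc]
  have e1 : ((σ i * σ j) ^ n)⁻¹ * (σ j * σ i * σ j) * (σ i * σ j) ^ n
      = ((σ i * σ j)⁻¹) ^ (n + 1) * (σ j * (σ i * σ j) ^ n) := by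
    rw [hsis, ← inv_pow, pow_succ]
    group
  rw [e1, sj_pow_comm cs i j n, ← mul_assoc, ← pow_add]
  congr 2
  omega

lemma pperm_pow_formula (i j : B) (k : ℕ) (t : W) (ε : ℤˣ) :
    ((pperm cs i * pperm cs j) ^ k) (t, ε) =
      ((σ i * σ j) ^ k * t * ((σ i * σ j)⁻¹) ^ k,
        (∏ r ∈ Finset.range (2 * k),
          (if t = ((σ i * σ j)⁻¹) ^ r * σ j then (-1 : ℤˣ) else 1)) * ε) := by
  induction k with
  | zero => simp
  | succ n ih =>
    have hsucc : ((pperm cs i * pperm cs j) ^ (n + 1)) (t, ε)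
        = (pperm cs i * pperm cs j) (((pperm cs i * pperm cs j) ^ n) (t, ε)) := by
      rw [pow_succ']; rfl
    rw [hsucc, ih, pperm_step]
    have hc1 : ((σ i * σ j) ^ n * t * ((σ i * σ j)⁻¹) ^ n = σ j)
        ↔ (t = ((σ i * σ j)⁻¹) ^ (2 * n) * σ j) := by
      rw [inv_pow, conj_eq_iff, conj_pow_sj cs i j n]
    have hc2 : ((σ i * σ j) ^ n * t * ((σ i * σ j)⁻¹) ^ n = σ j * σ i * σ j)
        ↔ (t = ((σ i * σ j)⁻¹) ^ (2 * n + 1) * σ j) := by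
      rw [inv_pow, conj_eq_iff, conj_pow_sjsisj cs i j n]
    rw [hc1, hc2, Prod.mk.injEq]
    constructor
    · rw [pow_succ' (σ i * σ j), pow_succ ((σ i * σ j)⁻¹)]
      simp only [mul_assoc]
    · have h2n : 2 * (n + 1) = (2 * n + 1) + 1 := by omega
      rw [h2n, Finset.prod_range_succ, Finset.prod_range_succ]
      ac_rfl

lemma pperm_liftable : M.IsLiftable (fun i => pperm cs i) := by
  intro i j
  show (pperm cs i * pperm cs j) ^ M.M i j = 1
  apply Equiv.ext
  rintro ⟨t, ε⟩
  rw [pperm_pow_formula, Equiv.Perm.one_apply]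
  have hpow : (σ i * σ j) ^ M i j = 1 := cs.simple_mul_simple_pow i j
  have hpowinv : ((σ i * σ j)⁻¹) ^ M i j = 1 := by rw [inv_pow, hpow, inv_one]
  have hprod : (∏ r ∈ Finset.range (2 * M i j),
      (if t = ((σ i * σ j)⁻¹) ^ r * σ j then (-1 : ℤˣ) else 1)) = 1 := by
    rw [two_mul, Finset.prod_range_add]
    have heq : ∀ r, ((σ i * σ j)⁻¹) ^ (M i j + r) = ((σ i * σ j)⁻¹) ^ r := by
      intro r
      rw [pow_add, hpowinv, one_mul]
    have : (∏ r ∈ Finset.range (M i j),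
        (if t = ((σ i * σ j)⁻¹) ^ (M i j + r) * σ j then (-1 : ℤˣ) else 1))
        = ∏ r ∈ Finset.range (M i j),
        (if t = ((σ i * σ j)⁻¹) ^ r * σ j then (-1 : ℤˣ) else 1) := by
      apply Finset.prod_congr rfl
      intro r _
      rw [heq r]
    rw [this, Int.units_mul_self]
  rw [hpow, hpowinv, hprod]
  simp

/-- The reflection representation homomorphism. -/
noncomputable def refRep : W →* Equiv.Perm (W × ℤˣ) :=
  cs.lift ⟨fun i => pperm cs i, pperm_liftable cs⟩

lemma refRep_simple (i : B) : refRep cs (σ i) = pperm cs i := by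
  unfold refRep
  exact cs.lift_apply_simple (pperm_liftable cs) i

/-- sign list for a word and element -/
noncomputable def sgnList (ω : List B) (t : W) : ℤˣ :=
  ((cs.rightInvSeq ω).map (fun r => if t = r then (-1 : ℤˣ) else 1)).prod

lemma sgnList_nil (t : W) : sgnList cs [] t = 1 := rfl

lemma sgnList_cons (i : B) (ω : List B) (t : W) :
    sgnList cs (i :: ω) t =
      (if t = (π ω)⁻¹ * σ i * (π ω) then (-1 : ℤˣ) else 1) * sgnList cs ω t := by
  unfold sgnList
  rfl

lemma refRep_wordProd_apply (ω : List B) (t : W) (ε : ℤˣ) :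
    refRep cs (π ω) (t, ε) = ((π ω) * t * (π ω)⁻¹, sgnList cs ω t * ε) := by
  induction ω with
  | nil => simp [sgnList_nil]
  | cons i ω ih =>
    rw [cs.wordProd_cons, map_mul, Equiv.Perm.mul_apply, ih, refRep_simple, pperm_apply,
      sgnList_cons]
    rw [Prod.mk.injEq]
    constructor
    · rw [mul_inv_rev, cs.inv_simple]
      group
    · have hcond : ((π ω) * t * (π ω)⁻¹ = σ i) ↔ (t = (π ω)⁻¹ * σ i * (π ω)) := by
        rw [conj_eq_iff]
      rw [hcond]
      by_cases h : t = (π ω)⁻¹ * σ i * (π ω) <;> simp [h] <;> ring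

/-- the sign of `w` at `t` -/
noncomputable def refSgn (w t : W) : ℤˣ := (refRep cs w (t, 1)).2

lemma refRep_apply (w t : W) (ε : ℤˣ) :
    refRep cs w (t, ε) = (w * t * w⁻¹, refSgn cs w t * ε) := by
  obtain ⟨ω, rfl⟩ := cs.wordProd_surjective w
  rw [refRep_wordProd_apply]
  unfold refSgn
  rw [refRep_wordProd_apply]
  simp

lemma refSgn_eq_sgnList (ω : List B) (t : W) : refSgn cs (π ω) t = sgnList cs ω t := by
  unfold refSgn
  rw [refRep_wordProd_apply]
  simp

lemma refSgn_reflection_self {t : W} (ht : cs.IsReflection t) : refSgn cs t t = -1 := by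
  obtain ⟨u, i, rfl⟩ := ht
  set t := u * σ i * u⁻¹ with htdef
  have h1 : refRep cs u⁻¹ (t, 1) = (σ i, refSgn cs u⁻¹ t) := by
    rw [refRep_apply]
    congr 1
    · rw [htdef]; group
    · simp
  have hcancel : refSgn cs u (σ i) * refSgn cs u⁻¹ t = 1 := by
    have h2 : refRep cs u (refRep cs u⁻¹ (t, 1)) = (t, 1) := by
      rw [← Equiv.Perm.mul_apply, ← map_mul, mul_inv_cancel, map_one, Equiv.Perm.one_apply]
    rw [h1, refRep_apply] at h2
    have := congrArg Prod.snd h2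
    simpa using this
  have hmain : refRep cs t (t, 1) = (t, -(refSgn cs u (σ i) * refSgn cs u⁻¹ t)) := by
    have hdecomp : refRep cs t = refRep cs u * refRep cs (σ i) * refRep cs u⁻¹ := by
      rw [← map_mul, ← map_mul, htdef]
    rw [hdecomp, Equiv.Perm.mul_apply, Equiv.Perm.mul_apply, h1, refRep_simple, pperm_apply,
      if_pos rfl]
    have hs : σ i * σ i * σ i = σ i := by
      rw [cs.simple_mul_simple_self, one_mul]
    rw [hs, refRep_apply]
    congr 1
    rw [mul_neg]
  rw [hcancel] at hmain
  unfold refSgn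
  rw [hmain]

lemma refSgn_one_of_notMem (ω : List B) {t : W} (h : t ∉ cs.rightInvSeq ω) :
    sgnList cs ω t = 1 := by
  unfold sgnList
  apply List.prod_eq_one
  intro x hx
  obtain ⟨r, hr, rfl⟩ := List.mem_map.mp hx
  rw [if_neg]
  intro hc
  exact h (hc ▸ hr)

lemma sgnList_neg_one_mem (ω : List B) {t : W} (h : sgnList cs ω t = -1) :
    t ∈ cs.rightInvSeq ω := by
  by_contra hc
  rw [refSgn_one_of_notMem cs ω hc] at h
  exact absurd h (by decide)

/-- **Strong exchange property** (membership form). -/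
theorem strong_exchange_mem {w t : W} (ht : cs.IsReflection t) (hl : ℓ (w * t) < ℓ w)
    {ω : List B} (hω : π ω = w) : t ∈ cs.rightInvSeq ω := by
  apply sgnList_neg_one_mem cs ω
  rw [← refSgn_eq_sgnList, hω]
  by_contra hne
  have hone : refSgn cs w t = 1 := by
    rcases Int.units_eq_one_or (refSgn cs w t) with h | h
    · exact h
    · exact absurd h hne
  -- decompose w = (w * t) * t
  have hdec : refRep cs w = refRep cs (w * t) * refRep cs t := by
    rw [← map_mul, mul_assoc, ht.mul_self, mul_one]
  have htt : refRep cs t (t, 1) = (t, -1) := by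
    rw [refRep_apply, refSgn_reflection_self cs ht]
    congr 1
    rw [ht.inv]
    rw [ht.mul_self, one_mul]
  have happ : refRep cs w (t, 1) = ((w * t) * t * (w * t)⁻¹, refSgn cs (w * t) t * (-1)) := by
    rw [hdec, Equiv.Perm.mul_apply, htt, refRep_apply]
  rw [refRep_apply] at happ
  have hsgn : refSgn cs (w * t) t = -1 := by
    have := congrArg Prod.snd happ
    simp only [] at this
    rcases Int.units_eq_one_or (refSgn cs (w * t) t) with h | h
    · exfalso
      rw [h, hone] at this
      simp at this
    · exact h
  -- take reduced word of w * t
  obtain ⟨ω', hred, hw'⟩ := cs.exists_reduced_word' (w * t)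
  have hmem : t ∈ cs.rightInvSeq ω' := by
    apply sgnList_neg_one_mem cs ω'
    rw [← refSgn_eq_sgnList, ← hw', hsgn]
  have := cs.isRightInversion_of_mem_rightInvSeq hred hmem
  rw [← hw'] at this
  have h2 := this.2
  rw [mul_assoc, ht.mul_self, mul_one] at h2
  omega

/-- Strong exchange property, eraseIdx form. -/
theorem strong_exchange {w t : W} (ht : cs.IsReflection t) (hl : ℓ (w * t) < ℓ w)
    {ω : List B} (hω : π ω = w) :
    ∃ j < ω.length, w * t = π (ω.eraseIdx j) := by
  have hmem := strong_exchange_mem cs ht hl hω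
  obtain ⟨j, hj, hget⟩ := List.mem_iff_getElem.mp hmem
  rw [cs.length_rightInvSeq] at hj
  refine ⟨j, hj, ?_⟩
  have := cs.wordProd_mul_getD_rightInvSeq ω j
  rw [hω] at this
  rw [← this]
  congr 1
  rw [List.getD_eq_getElem _ _ (by rw [cs.length_rightInvSeq]; exact hj)]
  exact hget.symm

/-- Left strong exchange, membership form. -/
theorem strong_exchange_mem_left {w t : W} (ht : cs.IsReflection t) (hl : ℓ (t * w) < ℓ w)
    {ω : List B} (hω : π ω = w) : t ∈ cs.leftInvSeq ω := by
  have hrev : π (ω.reverse) = w⁻¹ := by rw [cs.wordProd_reverse, hω]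
  have hlen : ℓ (w⁻¹ * t) < ℓ (w⁻¹) := by
    have : w⁻¹ * t = (t * w)⁻¹ := by rw [mul_inv_rev, ht.inv]
    rw [this, cs.length_inv, cs.length_inv]
    exact hl
  have := strong_exchange_mem cs ht hlen hrev
  rw [cs.rightInvSeq_reverse, List.mem_reverse] at this
  exact this

/-- Left strong exchange, eraseIdx form. -/
theorem strong_exchange_left {w t : W} (ht : cs.IsReflection t) (hl : ℓ (t * w) < ℓ w)
    {ω : List B} (hω : π ω = w) :
    ∃ j < ω.length, t * w = π (ω.eraseIdx j) := by
  have hmem := strong_exchange_mem_left cs ht hl hω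
  obtain ⟨j, hj, hget⟩ := List.mem_iff_getElem.mp hmem
  rw [cs.length_leftInvSeq] at hj
  refine ⟨j, hj, ?_⟩
  have := cs.getD_leftInvSeq_mul_wordProd ω j
  rw [hω] at this
  rw [← this]
  congr 1
  rw [List.getD_eq_getElem _ _ (by rw [cs.length_leftInvSeq]; exact hj)]
  exact hget.symm

/-! ### Deletion property and words over a subset -/

theorem exists_reduced_sublist_aux :
    ∀ (n : ℕ) (ω : List B), ω.length ≤ n →
      ∃ φ, φ.Sublist ω ∧ cs.IsReduced φ ∧ π φ = π ω := by
  intro n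
  induction n with
  | zero =>
    intro ω hω
    rw [Nat.le_zero, List.length_eq_zero_iff] at hω
    subst hω
    exact ⟨[], List.Sublist.refl _, by simp [CoxeterSystem.IsReduced], rfl⟩
  | succ n ih =>
    intro ω hω
    match ω with
    | [] => exact ⟨[], List.Sublist.refl _, by simp [CoxeterSystem.IsReduced], rfl⟩
    | i :: ρ =>
      have hρ : ρ.length ≤ n := by simpa using hω
      obtain ⟨φ', hsub, hred, hprod⟩ := ih ρ hρ
      rcases cs.length_simple_mul (π φ') i with hup | hdown
      · refine ⟨i :: φ', List.Sublist.cons₂ i hsub, ?_, ?_⟩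
        · unfold CoxeterSystem.IsReduced at hred ⊢
          rw [cs.wordProd_cons, hup, hred]
          simp
        · rw [cs.wordProd_cons, cs.wordProd_cons, hprod]
      · have hlt : ℓ (σ i * π φ') < ℓ (π φ') := by omega
        obtain ⟨j, hj, hex⟩ := strong_exchange_left cs (cs.isReflection_simple i) hlt rfl
        have hlen2 : (φ'.eraseIdx j).length ≤ n := by
          have h1 := List.length_eraseIdx_le φ' j
          have h2 := hsub.length_le
          omega
        obtain ⟨φ'', hsub2, hred2, hprod2⟩ := ih (φ'.eraseIdx j) hlen2
        refine ⟨φ'', ?_, hred2, ?_⟩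
        · exact (hsub2.trans (List.eraseIdx_sublist φ' j)).trans
            (hsub.trans (List.sublist_cons_self i ρ))
        · rw [hprod2, ← hex, cs.wordProd_cons, hprod]

theorem exists_reduced_sublist (ω : List B) :
    ∃ φ, φ.Sublist ω ∧ cs.IsReduced φ ∧ π φ = π ω :=
  exists_reduced_sublist_aux cs ω.length ω le_rfl

theorem exists_word_subset {J : Set B} {w : W}
    (hw : w ∈ Subgroup.closure (cs.simple '' J)) :
    ∃ ω : List B, π ω = w ∧ ∀ b ∈ ω, b ∈ J := by
  induction hw using Subgroup.closure_induction with
  | mem x hx =>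
    obtain ⟨i, hi, rfl⟩ := hx
    exact ⟨[i], by simp, by simpa using hi⟩
  | one => exact ⟨[], by simp, by simp⟩
  | mul x y hx hy ihx ihy =>
    obtain ⟨ω₁, h₁, hJ₁⟩ := ihx
    obtain ⟨ω₂, h₂, hJ₂⟩ := ihy
    refine ⟨ω₁ ++ ω₂, by rw [cs.wordProd_append, h₁, h₂], ?_⟩
    intro b hb
    rcases List.mem_append.mp hb with h | h
    · exact hJ₁ b h
    · exact hJ₂ b h
  | inv x hx ihx =>
    obtain ⟨ω₁, h₁, hJ₁⟩ := ihx
    refine ⟨ω₁.reverse, by rw [cs.wordProd_reverse, h₁], ?_⟩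
    intro b hb
    exact hJ₁ b (List.mem_reverse.mp hb)

theorem wordProd_mem_closure {J : Set B} {ω : List B} (hJ : ∀ b ∈ ω, b ∈ J) :
    π ω ∈ Subgroup.closure (cs.simple '' J) := by
  induction ω with
  | nil => rw [cs.wordProd_nil]; exact one_mem _
  | cons i ρ ih =>
    rw [cs.wordProd_cons]
    exact mul_mem (Subgroup.subset_closure ⟨i, hJ i (by simp), rfl⟩)
      (ih (fun b hb => hJ b (by simp [hb])))

theorem exists_reduced_word_subset {J : Set B} {w : W}
    (hw : w ∈ Subgroup.closure (cs.simple '' J)) :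
    ∃ ω : List B, π ω = w ∧ cs.IsReduced ω ∧ ∀ b ∈ ω, b ∈ J := by
  obtain ⟨ω₀, hprod, hJ₀⟩ := exists_word_subset cs hw
  obtain ⟨φ, hsub, hred, hφ⟩ := exists_reduced_sublist cs ω₀
  exact ⟨φ, by rw [hφ, hprod], hred, fun b hb => hJ₀ b (hsub.mem hb)⟩

/-! ### Bruhat order -/

def BRel : W → W → Prop :=
  fun a b => ∃ t, cs.IsReflection t ∧ b = a * t ∧ cs.length a < cs.length b

def Ble (u v : W) : Prop := Relation.ReflTransGen (BRel cs) u v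

lemma Ble.rfl {u : W} : Ble cs u u := Relation.ReflTransGen.refl

lemma Ble.trans {u v w : W} (h1 : Ble cs u v) (h2 : Ble cs v w) : Ble cs u w :=
  Relation.ReflTransGen.trans h1 h2

lemma Ble.length_le {u v : W} (h : Ble cs u v) : ℓ u ≤ ℓ v := by
  induction h with
  | refl => exact le_refl _
  | tail hb hr ih =>
    obtain ⟨t, _, _, hlt⟩ := hr
    omega

lemma Ble.eq_of_length_ge {u v : W} (h : Ble cs u v) (hl : ℓ v ≤ ℓ u) : u = v := by
  rcases (Relation.ReflTransGen.cases_tail h) with h1 | ⟨c, hc, hr⟩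
  · exact h1.symm
  · obtain ⟨t, _, _, hlt⟩ := hr
    have := (Ble.length_le cs hc)
    omega

lemma Ble.length_lt {u v : W} (h : Ble cs u v) (hne : u ≠ v) : ℓ u < ℓ v := by
  rcases Nat.lt_or_ge (ℓ u) (ℓ v) with h1 | h1
  · exact h1
  · exact absurd (Ble.eq_of_length_ge cs h h1) hne

lemma ble_step_right {u : W} {t : W} (ht : cs.IsReflection t) (h : ℓ u < ℓ (u * t)) :
    Ble cs u (u * t) :=
  Relation.ReflTransGen.single ⟨t, ht, Eq.refl _, h⟩

lemma ble_step_left {u : W} {t : W} (ht : cs.IsReflection t) (h : ℓ u < ℓ (t * u)) :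
    Ble cs u (t * u) := by
  have hconj : cs.IsReflection (u⁻¹ * t * u) := by
    have := ht.conj u⁻¹
    simpa using this
  have heq : t * u = u * (u⁻¹ * t * u) := by group
  rw [heq]
  apply ble_step_right cs hconj
  rw [← heq]
  exact h

lemma ble_simple_right {u : W} {i : B} (h : ℓ u < ℓ (u * σ i)) : Ble cs u (u * σ i) :=
  ble_step_right cs (cs.isReflection_simple i) h

lemma ble_simple_left {u : W} {i : B} (h : ℓ u < ℓ (σ i * u)) : Ble cs u (σ i * u) :=
  ble_step_left cs (cs.isReflection_simple i) h

/-- Subword property, direction 1: anything below `w` is a reduced sublist of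
any word for `w`. -/
theorem Ble.exists_reduced_sublist {u w : W} (h : Ble cs u w) :
    ∀ ω : List B, π ω = w → ∃ φ, φ.Sublist ω ∧ cs.IsReduced φ ∧ π φ = u := by
  induction h with
  | refl =>
    intro ω hω
    obtain ⟨φ, h1, h2, h3⟩ := CoxProof.exists_reduced_sublist cs ω
    exact ⟨φ, h1, h2, by rw [h3, hω]⟩
  | tail hb hr ih =>
    rename_i b c
    intro ω hω
    obtain ⟨t, ht, hc, hlt⟩ := hr
    have hbt : c * t = b := by rw [hc, mul_assoc, ht.mul_self, mul_one]
    have hl : ℓ (c * t) < ℓ c := by rw [hbt]; exact hlt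
    obtain ⟨j, hj, hex⟩ := strong_exchange cs ht hl hω
    obtain ⟨φ, h1, h2, h3⟩ := ih (ω.eraseIdx j) (by rw [← hex, hbt])
    exact ⟨φ, h1.trans (List.eraseIdx_sublist ω j), h2, h3⟩

lemma isReduced_cons {i : B} {ω : List B} (h : cs.IsReduced (i :: ω)) :
    cs.IsReduced ω ∧ ℓ (σ i * π ω) = ℓ (π ω) + 1 := by
  unfold CoxeterSystem.IsReduced at h ⊢
  rw [cs.wordProd_cons] at h
  have h1 := cs.length_wordProd_le ω
  have h2 : ℓ (σ i * π ω) ≤ ℓ (π ω) + 1 := by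
    have := cs.length_mul_le (σ i) (π ω)
    rw [cs.length_simple] at this
    omega
  simp only [List.length_cons] at h
  omega

lemma length_simple_mul_lt {w : W} {i : B} (h : ¬ ℓ w < ℓ (σ i * w)) : ℓ (σ i * w) < ℓ w := by
  rcases cs.length_simple_mul w i with h1 | h1 <;> omega

theorem bruhat_mutual : ∀ n : ℕ,
    (∀ (i : B) (a b : W), ℓ b ≤ n → Ble cs a b → ℓ a < ℓ (σ i * a) → ℓ b < ℓ (σ i * b) →
      Ble cs (σ i * a) (σ i * b)) ∧
    (∀ (i : B) (a c : W), ℓ c ≤ n → Ble cs a c → ℓ a < ℓ (σ i * a) → ℓ (σ i * c) < ℓ c →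
      Ble cs (σ i * a) c) ∧
    (∀ (ω φ : List B), ω.length ≤ n → cs.IsReduced ω → cs.IsReduced φ → φ.Sublist ω →
      Ble cs (π φ) (π ω)) := by
  intro n
  induction n with
  | zero =>
    refine ⟨?_, ?_, ?_⟩
    · intro i a b hb hab _ _
      have hba : a = b := Ble.eq_of_length_ge cs hab (by omega)
      rw [hba]
      exact Ble.rfl cs
    · intro i a c hc _ _ hcs
      omega
    · intro ω φ hlen _ _ hsub
      rw [Nat.le_zero, List.length_eq_zero_iff] at hlen
      subst hlen
      rw [List.sublist_nil.mp hsub]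
      exact Ble.rfl cs
  | succ n ih =>
    obtain ⟨S1, S2, S3⟩ := ih
    refine ⟨?_, ?_, ?_⟩
    · -- MONO
      intro i a b hb hab ha hbs
      rcases Relation.ReflTransGen.cases_tail hab with heq | ⟨c, hac, hr⟩
      · rw [← heq]
        exact Ble.rfl cs
      · obtain ⟨t, ht, hbc, hlt⟩ := hr
        have hcn : ℓ c ≤ n := by omega
        by_cases hcs : ℓ c < ℓ (σ i * c)
        · have h1 := S1 i a c hcn hac ha hcs
          have hstep : Ble cs (σ i * c) (σ i * b) := by
            have hb2 : σ i * b = (σ i * c) * t := by rw [hbc, mul_assoc]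
            rw [hb2]
            apply ble_step_right cs ht
            rw [← hb2]
            have e1 : ℓ (σ i * c) = ℓ c + 1 := by
              rcases cs.length_simple_mul c i with h | h <;> omega
            have e2 : ℓ (σ i * b) = ℓ b + 1 := by
              rcases cs.length_simple_mul b i with h | h <;> omega
            omega
          exact Ble.trans cs h1 hstep
        · have hcs' := length_simple_mul_lt cs hcs
          have h1 := S2 i a c hcn hac ha hcs'
          have h2 : Ble cs c b := by
            rw [hbc]
            exact ble_step_right cs ht (by rw [← hbc]; exact hlt)
          have h3 : Ble cs b (σ i * b) := ble_simple_left cs hbs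
          exact Ble.trans cs (Ble.trans cs h1 h2) h3
    · -- leftP1
      intro i a c hc hac ha hcs
      rcases Relation.ReflTransGen.cases_tail hac with heq | ⟨d, had, hr⟩
      · rw [heq] at hcs; omega
      · obtain ⟨t, ht, hcd, hlt⟩ := hr
        have hdn : ℓ d ≤ n := by omega
        by_cases hds : ℓ d < ℓ (σ i * d)
        · have h1 := S1 i a d hdn had ha hds
          obtain ⟨ρ, hρred, hρ⟩ := cs.exists_reduced_word' (σ i * c)
          have hωc : π (i :: ρ) = c := by
            rw [cs.wordProd_cons, ← hρ, cs.simple_mul_simple_cancel_left]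
          have hdct : c * t = d := by rw [hcd, mul_assoc, ht.mul_self, mul_one]
          have hct : ℓ (c * t) < ℓ c := by rw [hdct]; exact hlt
          obtain ⟨j, hj, hex⟩ := strong_exchange cs ht hct hωc
          match j with
          | 0 =>
            have hd2 : d = σ i * c := by
              rw [← hdct, hex]
              exact hρ.symm
            have h5 : σ i * d = c := by rw [hd2, cs.simple_mul_simple_cancel_left]
            rw [← h5]
            exact h1
          | Nat.succ j =>
            have herase : (i :: ρ).eraseIdx (j + 1) = i :: ρ.eraseIdx j := rfl
            have hd3 : σ i * d = π (ρ.eraseIdx j) := by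
              rw [← hdct, hex, herase, cs.wordProd_cons, cs.simple_mul_simple_cancel_left]
            obtain ⟨φ, hφsub, hφred, hφprod⟩ := CoxProof.exists_reduced_sublist cs (ρ.eraseIdx j)
            have hρlen : ρ.length ≤ n := by
              have h6 : ℓ (σ i * c) = ρ.length := by rw [hρ]; exact hρred
              omega
            have h2 : Ble cs (σ i * d) (σ i * c) := by
              have h4 := S3 ρ φ hρlen hρred hφred (hφsub.trans (List.eraseIdx_sublist ρ j))
              rw [hφprod] at h4
              rw [hd3, hρ]
              exact h4
            have h3 : Ble cs (σ i * c) c := by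
              have : c = σ i * (σ i * c) := by rw [cs.simple_mul_simple_cancel_left]
              nth_rewrite 2 [this]
              apply ble_simple_left cs
              rw [← this]
              exact hcs
            exact Ble.trans cs (Ble.trans cs h1 h2) h3
        · have hds' := length_simple_mul_lt cs hds
          have h1 := S2 i a d hdn had ha hds'
          have h2 : Ble cs d c := by
            rw [hcd]
            exact ble_step_right cs ht (by rw [← hcd]; exact hlt)
          exact Ble.trans cs h1 h2
    · -- SW2 bounded
      intro ω φ hlen hωred hφred hsub
      match ω with
      | [] =>
        rw [List.sublist_nil.mp hsub]
        exact Ble.rfl cs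
      | i :: ω' =>
        obtain ⟨hω'red, hωasc⟩ := isReduced_cons cs hωred
        have hω'len : ω'.length ≤ n := by simpa using hlen
        rcases List.sublist_cons_iff.mp hsub with h | ⟨φ', rfl, hφ'⟩
        · have hb := S3 ω' φ hω'len hω'red hφred h
          have hstep : Ble cs (π ω') (π (i :: ω')) := by
            rw [cs.wordProd_cons]
            exact ble_simple_left cs (by omega)
          exact Ble.trans cs hb hstep
        · obtain ⟨hφ'red, hφasc⟩ := isReduced_cons cs hφred
          have hb := S3 ω' φ' hω'len hω'red hφ'red hφ'
          have hlen' : ℓ (π ω') ≤ n := by rw [hω'red]; exact hω'len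
          have := S1 i (π φ') (π ω') hlen' hb (by omega) (by omega)
          rw [cs.wordProd_cons, cs.wordProd_cons]
          exact this

/-! ### Lifting lemmas (right-handed), chain property -/

theorem subword_le {ω φ : List B} (hω : cs.IsReduced ω) (hsub : φ.Sublist ω) :
    Ble cs (π φ) (π ω) := by
  obtain ⟨φ₂, hsub2, hred2, hprod2⟩ := CoxProof.exists_reduced_sublist cs φ
  rw [← hprod2]
  exact (bruhat_mutual cs ω.length).2.2 ω φ₂ le_rfl hω hred2 (hsub2.trans hsub)

lemma length_mul_simple_of_lt {u : W} {i : B} (h : ℓ u < ℓ (u * σ i)) :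
    ℓ (u * σ i) = ℓ u + 1 := by
  rcases cs.length_mul_simple u i with h1 | h1 <;> omega

lemma length_mul_simple_of_gt {u : W} {i : B} (h : ℓ (u * σ i) < ℓ u) :
    ℓ (u * σ i) + 1 = ℓ u := by
  rcases cs.length_mul_simple u i with h1 | h1 <;> omega

lemma length_mul_simple_lt_of_not {u : W} {i : B} (h : ¬ ℓ u < ℓ (u * σ i)) :
    ℓ (u * σ i) < ℓ u := by
  rcases cs.length_mul_simple u i with h1 | h1 <;> omega

/-- A reduced word for `w` ending in `i`, given a right descent `i`. -/
lemma exists_reduced_word_concat {w : W} {i : B} (h : ℓ (w * σ i) < ℓ w) :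
    ∃ ρ : List B, cs.IsReduced (ρ ++ [i]) ∧ π (ρ ++ [i]) = w ∧ π ρ = w * σ i
      ∧ ρ.length = ℓ (w * σ i) := by
  obtain ⟨ρ, hred, hρ⟩ := cs.exists_reduced_word' (w * σ i)
  refine ⟨ρ, ?_, ?_, hρ.symm, by rw [hρ]; exact hred.symm⟩
  · unfold CoxeterSystem.IsReduced
    rw [cs.wordProd_append, cs.wordProd_singleton, ← hρ, cs.simple_mul_simple_cancel_right]
    simp only [List.length_append, List.length_cons, List.length_nil]
    have h2 : ρ.length = ℓ (w * σ i) := by rw [hρ]; exact hred.symm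
    have h3 := length_mul_simple_of_gt cs h
    omega
  · rw [cs.wordProd_append, cs.wordProd_singleton, ← hρ, cs.simple_mul_simple_cancel_right]

lemma ble_desc_step {u : W} {i : B} (hu : ℓ (u * σ i) < ℓ u) : Ble cs (u * σ i) u := by
  nth_rewrite 2 [← cs.simple_mul_simple_cancel_right (w := u) i]
  apply ble_simple_right cs
  rw [cs.simple_mul_simple_cancel_right]
  exact hu

/-- Lifting property P3: descents descend. -/
theorem ble_P3 {u w : W} {i : B} (huw : Ble cs u w) (hw : ℓ (w * σ i) < ℓ w)
    (hu : ℓ (u * σ i) < ℓ u) : Ble cs (u * σ i) (w * σ i) := by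
  obtain ⟨ρ, hredωi, hπωi, hπρ, hlenρ⟩ := exists_reduced_word_concat cs hw
  have hredρ : cs.IsReduced ρ := by
    unfold CoxeterSystem.IsReduced
    rw [hπρ, hlenρ]
  obtain ⟨φ, hsub, hredφ, hπφ⟩ := Ble.exists_reduced_sublist cs huw (ρ ++ [i]) hπωi
  obtain ⟨φ₁, φ₂, rfl, hs1, hs2⟩ := List.sublist_append_iff.mp hsub
  rcases List.sublist_cons_iff.mp hs2 with h | ⟨φ₂', rfl, h⟩
  · rw [List.sublist_nil.mp h, List.append_nil] at hπφ
    have h1 : Ble cs u (w * σ i) := by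
      rw [← hπφ, ← hπρ]
      exact subword_le cs hredρ hs1
    exact Ble.trans cs (ble_desc_step cs hu) h1
  · have hφ2 : φ₂' = [] := List.sublist_nil.mp h
    subst hφ2
    have hπφ1 : π φ₁ = u * σ i := by
      rw [cs.wordProd_append, cs.wordProd_singleton] at hπφ
      rw [← hπφ, cs.simple_mul_simple_cancel_right]
    rw [← hπφ1, ← hπρ]
    exact subword_le cs hredρ hs1

/-- Lifting property P2: if `u ≤ w`, `i` a right descent of `w` but ascent of `u`,
then `u ≤ w * σ i`. -/
theorem ble_P2 {u w : W} {i : B} (huw : Ble cs u w) (hw : ℓ (w * σ i) < ℓ w)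
    (hu : ℓ u < ℓ (u * σ i)) : Ble cs u (w * σ i) := by
  obtain ⟨ρ, hredωi, hπωi, hπρ, hlenρ⟩ := exists_reduced_word_concat cs hw
  have hredρ : cs.IsReduced ρ := by
    unfold CoxeterSystem.IsReduced
    rw [hπρ, hlenρ]
  obtain ⟨φ, hsub, hredφ, hπφ⟩ := Ble.exists_reduced_sublist cs huw (ρ ++ [i]) hπωi
  obtain ⟨φ₁, φ₂, rfl, hs1, hs2⟩ := List.sublist_append_iff.mp hsub
  rcases List.sublist_cons_iff.mp hs2 with h | ⟨φ₂', rfl, h⟩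
  · rw [List.sublist_nil.mp h, List.append_nil] at hπφ
    rw [← hπφ, ← hπρ]
    exact subword_le cs hredρ hs1
  · exfalso
    have hφ2 : φ₂' = [] := List.sublist_nil.mp h
    subst hφ2
    have hπφ1 : π φ₁ = u * σ i := by
      rw [cs.wordProd_append, cs.wordProd_singleton] at hπφ
      rw [← hπφ, cs.simple_mul_simple_cancel_right]
    have h1 : ℓ (u * σ i) ≤ φ₁.length := by
      rw [← hπφ1]
      exact cs.length_wordProd_le φ₁
    have h2 : ℓ u = φ₁.length + 1 := by
      unfold CoxeterSystem.IsReduced at hredφ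
      rw [hπφ] at hredφ
      simpa using hredφ
    omega

/-- Lifting property: if `x ≤ w * σ i < w` and `i` is an ascent of `x` then `x * σ i ≤ w`. -/
theorem ble_P4 {x w : W} {i : B} (hw : ℓ (w * σ i) < ℓ w) (hx : Ble cs x (w * σ i))
    (hxa : ℓ x < ℓ (x * σ i)) : Ble cs (x * σ i) w := by
  obtain ⟨ρ, hredωi, hπωi, hπρ, hlenρ⟩ := exists_reduced_word_concat cs hw
  obtain ⟨φ, hsub, hredφ, hπφ⟩ := Ble.exists_reduced_sublist cs hx ρ hπρ
  have hsub2 : (φ ++ [i]).Sublist (ρ ++ [i]) := hsub.append_right [i]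
  have := subword_le cs hredωi hsub2
  rw [hπωi, cs.wordProd_append, cs.wordProd_singleton, hπφ] at this
  exact this

/-- Lifting property P1: if `u ≤ w` and `i` is a right descent of `w`, then `u * σ i ≤ w`. -/
theorem ble_P1 {u w : W} {i : B} (huw : Ble cs u w) (hw : ℓ (w * σ i) < ℓ w) :
    Ble cs (u * σ i) w := by
  by_cases hu : ℓ u < ℓ (u * σ i)
  · exact ble_P4 cs hw (ble_P2 cs huw hw hu) hu
  · exact Ble.trans cs (ble_desc_step cs (length_mul_simple_lt_of_not cs hu)) huw

/-- Chain property: there is a cocover of `w` above `u`. -/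
theorem chain_property_aux : ∀ (n : ℕ) (w u : W), ℓ w ≤ n → Ble cs u w → u ≠ w →
    ∃ y, Ble cs u y ∧ Ble cs y w ∧ ℓ w = ℓ y + 1 := by
  intro n
  induction n with
  | zero =>
    intro w u hn hle hne
    have := Ble.length_lt cs hle hne
    omega
  | succ n ihn =>
    intro w u hn hle hne
    have hlt : ℓ u < ℓ w := Ble.length_lt cs hle hne
    have hw1 : w ≠ 1 := by
      intro h
      rw [h] at hlt
      simp at hlt
    obtain ⟨i, hdesc⟩ := cs.exists_rightDescent_of_ne_one hw1
    have hdesc' : ℓ (w * σ i) < ℓ w := hdesc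
    have hws : Ble cs (w * σ i) w := ble_desc_step cs hdesc'
    have hlws : ℓ w = ℓ (w * σ i) + 1 := (length_mul_simple_of_gt cs hdesc').symm
    by_cases hu : Ble cs u (w * σ i)
    · exact ⟨w * σ i, hu, hws, hlws⟩
    · have hud : ℓ (u * σ i) < ℓ u := by
        by_contra h
        push_neg at h
        have : ℓ u < ℓ (u * σ i) := by
          rcases cs.length_mul_simple u i with h1 | h1 <;> omega
        exact hu (ble_P2 cs hle hdesc' this)
      have h1 : Ble cs (u * σ i) (w * σ i) := ble_P3 cs hle hdesc' hud
      have hne2 : u * σ i ≠ w * σ i := by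
        intro h
        apply hne
        have := congrArg (fun z => z * σ i) h
        simpa [cs.simple_mul_simple_cancel_right] using this
      obtain ⟨z, hz1, hz2, hz3⟩ := ihn (w * σ i) (u * σ i) (by omega) h1 hne2
      by_cases hza : ℓ z < ℓ (z * σ i)
      · refine ⟨z * σ i, ?_, ?_, ?_⟩
        · -- u ≤ z * σ i via P4 with w := z * σ i
          have hdz : ℓ ((z * σ i) * σ i) < ℓ (z * σ i) := by
            rw [cs.simple_mul_simple_cancel_right]
            exact hza
          have hx : Ble cs (u * σ i) ((z * σ i) * σ i) := by
            rw [cs.simple_mul_simple_cancel_right]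
            exact hz1
          have hxa : ℓ (u * σ i) < ℓ ((u * σ i) * σ i) := by
            rw [cs.simple_mul_simple_cancel_right]
            exact hud
          have := ble_P4 cs hdz hx hxa
          rwa [cs.simple_mul_simple_cancel_right] at this
        · exact ble_P4 cs hdesc' hz2 hza
        · rw [length_mul_simple_of_lt cs hza]
          omega
      · exfalso
        have hzd := length_mul_simple_lt_of_not cs hza
        have h3 : Ble cs ((u * σ i) * σ i) z := ble_P1 cs hz1 hzd
        rw [cs.simple_mul_simple_cancel_right] at h3
        exact hu (Ble.trans cs h3 hz2)

theorem chain_property {w u : W} (hle : Ble cs u w) (hne : u ≠ w) :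
    ∃ y, Ble cs u y ∧ Ble cs y w ∧ ℓ w = ℓ y + 1 :=
  chain_property_aux cs (ℓ w) w u le_rfl hle hne

/-- A cover is a single reflection step. -/
theorem cover_reflection {u w : W} (h : Ble cs u w) (hl : ℓ w = ℓ u + 1) :
    ∃ t, cs.IsReflection t ∧ w = u * t := by
  rcases Relation.ReflTransGen.cases_tail h with heq | ⟨c, hc, hr⟩
  · exfalso
    rw [heq] at hl
    omega
  · obtain ⟨t, ht, hw, hlt⟩ := hr
    have h1 : ℓ u ≤ ℓ c := Ble.length_le cs hc
    have h2 : u = c := Ble.eq_of_length_ge cs hc (by omega)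
    exact ⟨t, ht, by rw [hw, h2]⟩

lemma mul_simple_cancel {a b : W} {i : B} (h : a * σ i = b * σ i) : a = b := by
  have := congrArg (fun z => z * σ i) h
  simpa [cs.simple_mul_simple_cancel_right] using this

lemma ble_P4' {x m : W} {i : B} (hx : Ble cs (x * σ i) m) (hxd : ℓ (x * σ i) < ℓ x)
    (hma : ℓ m < ℓ (m * σ i)) : Ble cs x (m * σ i) := by
  have hd : ℓ ((m * σ i) * σ i) < ℓ (m * σ i) := by
    rw [cs.simple_mul_simple_cancel_right]; exact hma
  have h2 : Ble cs (x * σ i) ((m * σ i) * σ i) := by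
    rw [cs.simple_mul_simple_cancel_right]; exact hx
  have h3 : ℓ (x * σ i) < ℓ ((x * σ i) * σ i) := by
    rw [cs.simple_mul_simple_cancel_right]; exact hxd
  have := ble_P4 cs hd h2 h3
  rwa [cs.simple_mul_simple_cancel_right] at this

/-- In an interval of length 2 there are two distinct middle elements. -/
theorem two_middles_aux : ∀ (n : ℕ) (w y : W), ℓ w ≤ n → Ble cs y w → ℓ w = ℓ y + 2 →
    ∃ z₁ z₂, z₁ ≠ z₂ ∧ (Ble cs y z₁ ∧ Ble cs z₁ w ∧ ℓ z₁ = ℓ y + 1) ∧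
      (Ble cs y z₂ ∧ Ble cs z₂ w ∧ ℓ z₂ = ℓ y + 1) := by
  intro n
  induction n with
  | zero =>
    intro w y hn hle hgap
    omega
  | succ n ih =>
    intro w y hn hle hgap
    have hw1 : w ≠ 1 := by
      intro h
      rw [h] at hgap
      simp at hgap
    obtain ⟨i, hdesc⟩ := cs.exists_rightDescent_of_ne_one hw1
    have hd : ℓ (w * σ i) < ℓ w := hdesc
    have hws_len := length_mul_simple_of_gt cs hd
    by_cases hy : Ble cs y (w * σ i)
    · by_cases hya : ℓ y < ℓ (y * σ i)
      · refine ⟨w * σ i, y * σ i, ?_, ⟨hy, ble_desc_step cs hd, by omega⟩,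
          ⟨ble_simple_right cs hya, ble_P4 cs hd hy hya, by
            have := length_mul_simple_of_lt cs hya; omega⟩⟩
        intro h
        have heq2 : y = w := mul_simple_cancel cs h.symm
        rw [heq2] at hgap
        omega
      · have hyd := length_mul_simple_lt_of_not cs hya
        have hyd_len := length_mul_simple_of_gt cs hyd
        have h1 : Ble cs (y * σ i) (w * σ i) :=
          Ble.trans cs (ble_desc_step cs hyd) hy
        obtain ⟨m₁, m₂, hmne, hm₁, hm₂⟩ :=
          ih (w * σ i) (y * σ i) (by omega) h1 (by omega)
        have hpick : ∃ m, m ≠ y ∧ Ble cs (y * σ i) m ∧ Ble cs m (w * σ i)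
            ∧ ℓ m = ℓ (y * σ i) + 1 := by
          by_cases h : m₁ = y
          · refine ⟨m₂, ?_, hm₂.1, hm₂.2.1, hm₂.2.2⟩
            rw [h] at hmne
            exact (Ne.symm hmne)
          · exact ⟨m₁, h, hm₁.1, hm₁.2.1, hm₁.2.2⟩
        obtain ⟨m, hmy, hm1, hm2, hm3⟩ := hpick
        have hma : ℓ m < ℓ (m * σ i) := by
          by_contra h
          have hmd := length_mul_simple_lt_of_not cs h
          have h4 := ble_P1 cs hm1 hmd
          rw [cs.simple_mul_simple_cancel_right] at h4
          exact hmy (Ble.eq_of_length_ge cs h4 (by omega)).symm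
        refine ⟨w * σ i, m * σ i, ?_, ⟨hy, ble_desc_step cs hd, by omega⟩,
          ⟨ble_P4' cs hm1 hyd hma, ble_P4 cs hd hm2 hma, by
            have := length_mul_simple_of_lt cs hma; omega⟩⟩
        intro h
        have heq2 : m = w := mul_simple_cancel cs h.symm
        rw [heq2] at hm3
        omega
    · have hyd : ℓ (y * σ i) < ℓ y := by
        by_contra h
        push_neg at h
        have hasc : ℓ y < ℓ (y * σ i) := by
          rcases cs.length_mul_simple y i with h1 | h1 <;> omega
        exact hy (ble_P2 cs hle hd hasc)
      have hyd_len := length_mul_simple_of_gt cs hyd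
      have h1 : Ble cs (y * σ i) (w * σ i) := ble_P3 cs hle hd hyd
      obtain ⟨m₁, m₂, hmne, ⟨hma1, hmb1, hmc1⟩, ⟨hma2, hmb2, hmc2⟩⟩ :=
        ih (w * σ i) (y * σ i) (by omega) h1 (by omega)
      have hasc : ∀ m, Ble cs (y * σ i) m → Ble cs m (w * σ i) → ℓ m < ℓ (m * σ i) := by
        intro m hm1 hm2
        by_contra h
        have hmd := length_mul_simple_lt_of_not cs h
        have h4 := ble_P1 cs hm1 hmd
        rw [cs.simple_mul_simple_cancel_right] at h4
        exact hy (Ble.trans cs h4 hm2)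
      have ha1 := hasc m₁ hma1 hmb1
      have ha2 := hasc m₂ hma2 hmb2
      refine ⟨m₁ * σ i, m₂ * σ i, ?_,
        ⟨ble_P4' cs hma1 hyd ha1, ble_P4 cs hd hmb1 ha1, by
          have := length_mul_simple_of_lt cs ha1; omega⟩,
        ⟨ble_P4' cs hma2 hyd ha2, ble_P4 cs hd hmb2 ha2, by
          have := length_mul_simple_of_lt cs ha2; omega⟩⟩
      intro h
      exact hmne (mul_simple_cancel cs h)

theorem two_middles {w y : W} (hle : Ble cs y w) (hgap : ℓ w = ℓ y + 2) :
    ∃ z₁ z₂, z₁ ≠ z₂ ∧ (Ble cs y z₁ ∧ Ble cs z₁ w ∧ ℓ z₁ = ℓ y + 1) ∧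
      (Ble cs y z₂ ∧ Ble cs z₂ w ∧ ℓ z₂ = ℓ y + 1) :=
  two_middles_aux cs (ℓ w) w y le_rfl hle hgap

/-! ### Cosets of standard parabolic subgroups -/

variable (J : Set B)

def InCoset (x w : W) : Prop := ∃ g ∈ Subgroup.closure (cs.simple '' J), x = g * w

lemma inCoset_refl (w : W) : InCoset cs J w w := ⟨1, one_mem _, by simp⟩

lemma inCoset_symm {x w : W} (h : InCoset cs J x w) : InCoset cs J w x := by
  obtain ⟨g, hg, rfl⟩ := h
  exact ⟨g⁻¹, inv_mem hg, by group⟩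

lemma inCoset_trans {x y w : W} (h1 : InCoset cs J x y) (h2 : InCoset cs J y w) :
    InCoset cs J x w := by
  obtain ⟨g, hg, rfl⟩ := h1
  obtain ⟨h, hh, rfl⟩ := h2
  exact ⟨g * h, mul_mem hg hh, by group⟩

lemma inCoset_congr {v w x : W} (hv : InCoset cs J v w) :
    InCoset cs J x v ↔ InCoset cs J x w :=
  ⟨fun h => inCoset_trans cs J h hv, fun h => inCoset_trans cs J h (inCoset_symm cs J hv)⟩

/-- Existence of a minimal length coset representative. -/
lemma exists_min_coset_rep (w : W) :
    ∃ v, InCoset cs J v w ∧ ∀ x, InCoset cs J x w → ℓ v ≤ ℓ x := by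
  classical
  have hex : ∃ n, ∃ x, InCoset cs J x w ∧ ℓ x = n := ⟨ℓ w, w, inCoset_refl cs J w, rfl⟩
  obtain ⟨v, hv, hlv⟩ := Nat.find_spec hex
  refine ⟨v, hv, ?_⟩
  intro x hx
  have := Nat.find_min' hex ⟨x, hx, rfl⟩
  omega

/-- Length additivity over the minimal coset representative. -/
theorem min_additive_aux : ∀ (n : ℕ) (v g : W),
    (∀ x, InCoset cs J x v → ℓ v ≤ ℓ x) → g ∈ Subgroup.closure (cs.simple '' J) →
    ℓ g ≤ n → ℓ (g * v) = ℓ g + ℓ v := by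
  intro n
  induction n with
  | zero =>
    intro v g _ _ hg
    have : g = 1 := cs.length_eq_zero_iff.mp (by omega)
    rw [this]
    simp
  | succ n ih =>
    intro v g hmin hgmem hgn
    by_cases hg0 : ℓ g = 0
    · have : g = 1 := cs.length_eq_zero_iff.mp hg0
      rw [this]
      simp
    · obtain ⟨ρ, hπρ, hredρ, hJρ⟩ := exists_reduced_word_subset cs hgmem
      match ρ, hπρ, hredρ, hJρ with
      | [], hπρ, _, _ => exact absurd (by rw [← hπρ]; simp) hg0
      | j :: ρ', hπρ, hredρ, hJρ =>
        obtain ⟨hredρ', hlj⟩ := isReduced_cons cs hredρ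
        have hg'mem : π ρ' ∈ Subgroup.closure (cs.simple '' J) :=
          wordProd_mem_closure cs (fun b hb => hJρ b (by simp [hb]))
        have hlg' : ℓ (π ρ') = ρ'.length := hredρ'
        have hlg : ℓ g = ρ'.length + 1 := by
          rw [← hπρ]
          unfold CoxeterSystem.IsReduced at hredρ
          rw [hredρ]
          simp
        have hIH := ih v (π ρ') hmin hg'mem (by omega)
        -- now show the simple letter goes up
        obtain ⟨ωv, hredv, hπv⟩ := cs.exists_reduced_word' v
        have hτred : cs.IsReduced (ρ' ++ ωv) := by
          unfold CoxeterSystem.IsReduced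
          rw [cs.wordProd_append, ← hπv, hIH]
          simp only [List.length_append]
          rw [hlg']
          congr 1
          rw [hπv]
          exact hredv
        have hτπ : π (ρ' ++ ωv) = π ρ' * v := by
          rw [cs.wordProd_append, ← hπv]
        have hup : ℓ (σ j * (π ρ' * v)) = ℓ (π ρ' * v) + 1 := by
          rcases cs.length_simple_mul (π ρ' * v) j with h | h
          · exact h
          · exfalso
            have hlt : ℓ (σ j * (π ρ' * v)) < ℓ (π ρ' * v) := by omega
            obtain ⟨k, hk, hex⟩ :=
              strong_exchange_left cs (cs.isReflection_simple j) hlt hτπ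
            rcases Nat.lt_or_ge k ρ'.length with hcase | hcase
            · rw [List.eraseIdx_append_of_lt_length hcase ωv] at hex
              have hgv : σ j * (π ρ' * v) = π (ρ'.eraseIdx k) * v := by
                rw [hex, cs.wordProd_append, hπv]
              have hgeq : g * v = π (ρ'.eraseIdx k) * v := by
                rw [← hπρ, cs.wordProd_cons, mul_assoc, hgv]
              have hgeq2 : g = π (ρ'.eraseIdx k) := by
                have := congrArg (fun z => z * v⁻¹) hgeq
                simpa using this
              have : ℓ g ≤ (ρ'.eraseIdx k).length := by
                rw [hgeq2]
                exact cs.length_wordProd_le _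
              have := List.length_eraseIdx_add_one hcase
              omega
            · rw [List.eraseIdx_append_of_length_le hcase ωv] at hex
              have hv'' : σ j * (π ρ' * v) = π ρ' * π (ωv.eraseIdx (k - ρ'.length)) := by
                rw [hex, cs.wordProd_append]
              have hv''coset : InCoset cs J (π (ωv.eraseIdx (k - ρ'.length))) v := by
                refine ⟨(π ρ')⁻¹ * σ j * (π ρ'), ?_, ?_⟩
                · exact mul_mem (mul_mem (inv_mem hg'mem)
                    (Subgroup.subset_closure ⟨j, hJρ j (by simp), rfl⟩)) hg'mem
                · calc π (ωv.eraseIdx (k - ρ'.length))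
                      = (π ρ')⁻¹ * (π ρ' * π (ωv.eraseIdx (k - ρ'.length))) := by group
                    _ = (π ρ')⁻¹ * (σ j * (π ρ' * v)) := by rw [← hv'']
                    _ = ((π ρ')⁻¹ * σ j * π ρ') * v := by group
              have hlen'' : ℓ (π (ωv.eraseIdx (k - ρ'.length))) < ℓ v := by
                have h1 : ℓ (π (ωv.eraseIdx (k - ρ'.length))) ≤ (ωv.eraseIdx (k - ρ'.length)).length :=
                  cs.length_wordProd_le _
                have hklt : k - ρ'.length < ωv.length := by
                  simp only [List.length_append] at hk
                  omega
                have h2 := List.length_eraseIdx_add_one hklt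
                have h3 : ℓ v = ωv.length := by rw [hπv]; exact hredv
                omega
              exact absurd (hmin _ hv''coset) (by omega)
        have hfinal : g * v = σ j * (π ρ' * v) := by
          rw [← hπρ, cs.wordProd_cons, mul_assoc]
        rw [hfinal, hup, hIH, hlg, hlg']
        omega

theorem min_additive {v g : W} (hmin : ∀ x, InCoset cs J x v → ℓ v ≤ ℓ x)
    (hg : g ∈ Subgroup.closure (cs.simple '' J)) : ℓ (g * v) = ℓ g + ℓ v :=
  min_additive_aux cs J (ℓ g) v g hmin hg le_rfl

/-- The minimal coset representative is the unique one of its length. -/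
theorem min_unique {v x : W} (hmin : ∀ x, InCoset cs J x v → ℓ v ≤ ℓ x)
    (hx : InCoset cs J x v) (hlen : ℓ x ≤ ℓ v) : x = v := by
  obtain ⟨g, hg, rfl⟩ := hx
  have := min_additive cs J hmin hg
  have hg0 : ℓ g = 0 := by omega
  rw [cs.length_eq_zero_iff.mp hg0]
  simp

/-- R0: two elements of length `ℓ v - 1` below the minimal coset representative `v`
lying in the same coset must be equal. -/
theorem R0_aux : ∀ (n : ℕ) (v x₁ x₂ g : W), ℓ v ≤ n →
    (∀ x, InCoset cs J x v → ℓ v ≤ ℓ x) →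
    Ble cs x₁ v → Ble cs x₂ v → ℓ x₁ + 1 = ℓ v → ℓ x₂ + 1 = ℓ v →
    g ∈ Subgroup.closure (cs.simple '' J) → x₂ = g * x₁ → x₁ = x₂ := by
  intro n
  induction n with
  | zero =>
    intro v x₁ x₂ g hn _ _ _ h1 _ _ _
    omega
  | succ n ih =>
    intro v x₁ x₂ g hn hmin hb1 hb2 hl1 hl2 hgmem hgx
    have hv1 : v ≠ 1 := by
      intro h
      rw [h] at hl1
      simp at hl1
    obtain ⟨i, hdesc⟩ := cs.exists_rightDescent_of_ne_one hv1
    have hd : ℓ (v * σ i) < ℓ v := hdesc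
    have hdlen := length_mul_simple_of_gt cs hd
    have hminvs : ∀ x, InCoset cs J x (v * σ i) → ℓ (v * σ i) ≤ ℓ x := by
      rintro x ⟨g₂, hg₂, rfl⟩
      have h1 : ℓ (g₂ * v) = ℓ g₂ + ℓ v := min_additive cs J hmin hg₂
      have h2 : ℓ (g₂ * v * σ i) + 1 = ℓ (g₂ * v) ∨ ℓ (g₂ * v * σ i) = ℓ (g₂ * v) + 1 := by
        rcases cs.length_mul_simple (g₂ * v) i with h | h
        · right; exact h
        · left; exact h
      have h3 : ℓ v ≤ ℓ (g₂ * v) := by omega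
      rw [mul_assoc] at h2
      omega
    -- analyse each xⱼ
    have hcase : ∀ x, Ble cs x v → ℓ x + 1 = ℓ v →
        x = v * σ i ∨ (ℓ (x * σ i) < ℓ x ∧ Ble cs (x * σ i) (v * σ i)
          ∧ ℓ (x * σ i) + 1 = ℓ (v * σ i)) := by
      intro x hb hl
      by_cases hxa : ℓ x < ℓ (x * σ i)
      · left
        have := ble_P2 cs hb hd hxa
        exact Ble.eq_of_length_ge cs this (by omega)
      · right
        have hxd := length_mul_simple_lt_of_not cs hxa
        have hxdlen := length_mul_simple_of_gt cs hxd
        exact ⟨hxd, ble_P3 cs hb hd hxd, by omega⟩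
    rcases hcase x₁ hb1 hl1 with he1 | ⟨hd1, hb1', hl1'⟩
    · subst he1
      have hadd : ℓ (g * (v * σ i)) = ℓ g + ℓ (v * σ i) := min_additive cs J hminvs hgmem
      rw [← hgx] at hadd
      have hg1 : g = 1 := cs.length_eq_zero_iff.mp (by omega)
      rw [hgx, hg1, one_mul]
    · rcases hcase x₂ hb2 hl2 with he2 | ⟨hd2, hb2', hl2'⟩
      · subst he2
        have hx1c : x₁ = g⁻¹ * (v * σ i) := by rw [hgx]; group
        have hadd : ℓ (g⁻¹ * (v * σ i)) = ℓ g⁻¹ + ℓ (v * σ i) :=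
          min_additive cs J hminvs (inv_mem hgmem)
        rw [← hx1c] at hadd
        have hginv : g⁻¹ = 1 := cs.length_eq_zero_iff.mp (by omega)
        rw [hx1c, hginv, one_mul]
      · have hres := ih (v * σ i) (x₁ * σ i) (x₂ * σ i) g (by omega) hminvs hb1' hb2'
          hl1' hl2' hgmem (by rw [hgx, mul_assoc])
        exact mul_simple_cancel cs hres

theorem R0 {v x₁ x₂ g : W} (hmin : ∀ x, InCoset cs J x v → ℓ v ≤ ℓ x)
    (hb1 : Ble cs x₁ v) (hb2 : Ble cs x₂ v) (hl1 : ℓ x₁ + 1 = ℓ v) (hl2 : ℓ x₂ + 1 = ℓ v)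
    (hg : g ∈ Subgroup.closure (cs.simple '' J)) (hgx : x₂ = g * x₁) : x₁ = x₂ :=
  R0_aux cs J (ℓ v) v x₁ x₂ g le_rfl hmin hb1 hb2 hl1 hl2 hg hgx

/-- Claim D: an element outside the coset `C` cannot be covered by two distinct
elements of `C`. -/
theorem no_two_covers {w v y z₁ z₂ : W}
    (hv : InCoset cs J v w) (hmin : ∀ x, InCoset cs J x w → ℓ v ≤ ℓ x)
    (hz1 : InCoset cs J z₁ w) (hz2 : InCoset cs J z₂ w) (hzne : z₁ ≠ z₂)
    (hy : ¬ InCoset cs J y w)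
    (hyb1 : Ble cs y z₁) (hyb2 : Ble cs y z₂)
    (hyl1 : ℓ z₁ = ℓ y + 1) (hyl2 : ℓ z₂ = ℓ y + 1) : False := by
  classical
  -- minimality relative to v's own coset
  have hminv : ∀ x, InCoset cs J x v → ℓ v ≤ ℓ x := by
    intro x hx
    exact hmin x ((inCoset_congr cs J hv).mp hx)
  obtain ⟨ωv, hredv, hπv⟩ := cs.exists_reduced_word' v
  have hlv : ℓ v = ωv.length := by rw [hπv]; exact hredv
  -- main per-cover analysis
  have key : ∀ z, InCoset cs J z w → Ble cs y z → ℓ z = ℓ y + 1 →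
      ∃ w' v', w' ∈ Subgroup.closure (cs.simple '' J) ∧ z = w' * v ∧ y = w' * v' ∧
        Ble cs v' v ∧ ℓ v' + 1 = ℓ v := by
    intro z hzw hyb hyl
    have hzv : InCoset cs J z v := (inCoset_congr cs J hv).mpr hzw
    obtain ⟨w', hw'mem, rfl⟩ := hzv
    have haddz : ℓ (w' * v) = ℓ w' + ℓ v := min_additive cs J hminv hw'mem
    obtain ⟨ρ, hπρ, hredρ, hJρ⟩ := exists_reduced_word_subset cs hw'mem
    have hlρ : ρ.length = ℓ w' := by rw [← hπρ]; exact hredρ.symm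
    have hτπ : π (ρ ++ ωv) = w' * v := by rw [cs.wordProd_append, hπρ, ← hπv]
    -- the cover reflection
    obtain ⟨t, ht, hzyt⟩ := cover_reflection cs hyb hyl
    have hyzt : (w' * v) * t = y := by
      rw [hzyt, mul_assoc, ht.mul_self, mul_one]
    have hlt : ℓ ((w' * v) * t) < ℓ (w' * v) := by rw [hyzt]; omega
    obtain ⟨k, hk, hex⟩ := strong_exchange cs ht hlt hτπ
    rw [hyzt] at hex
    rcases Nat.lt_or_ge k ρ.length with hcase | hcase
    · exfalso
      rw [List.eraseIdx_append_of_lt_length hcase ωv] at hex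
      apply hy
      apply (inCoset_congr cs J hv).mp
      refine ⟨π (ρ.eraseIdx k), ?_, ?_⟩
      · exact wordProd_mem_closure cs
          (fun b hb => hJρ b ((List.eraseIdx_sublist ρ k).mem hb))
      · rw [hex, cs.wordProd_append, hπv]
    · rw [List.eraseIdx_append_of_length_le hcase ωv] at hex
      set v' := π (ωv.eraseIdx (k - ρ.length)) with hv'def
      have hyv' : y = w' * v' := by rw [hex, cs.wordProd_append, hπρ]
      have hklt : k - ρ.length < ωv.length := by
        simp only [List.length_append] at hk
        omega
      have hlenv' : ℓ v' + 1 = ℓ v := by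
        have h1 : ℓ v' ≤ (ωv.eraseIdx (k - ρ.length)).length := cs.length_wordProd_le _
        have h2 := List.length_eraseIdx_add_one hklt
        have h3 : ℓ y ≤ ℓ w' + ℓ v' := by
          rw [hyv']
          exact cs.length_mul_le w' v'
        omega
      have hblev' : Ble cs v' v := by
        rw [hv'def, hπv]
        exact subword_le cs hredv (List.eraseIdx_sublist ωv (k - ρ.length))
      exact ⟨w', v', hw'mem, rfl, hyv', hblev', hlenv'⟩
  obtain ⟨w₁, v₁, hw₁mem, hz1eq, hy1, hbv1, hlv1⟩ := key z₁ hz1 hyb1 hyl1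
  obtain ⟨w₂, v₂, hw₂mem, hz2eq, hy2, hbv2, hlv2⟩ := key z₂ hz2 hyb2 hyl2
  have hgv : v₂ = (w₂⁻¹ * w₁) * v₁ := by
    have h1 : w₁ * v₁ = w₂ * v₂ := by rw [← hy1, ← hy2]
    calc v₂ = w₂⁻¹ * (w₂ * v₂) := by group
    _ = w₂⁻¹ * (w₁ * v₁) := by rw [← h1]
    _ = (w₂⁻¹ * w₁) * v₁ := by group
  have hveq : v₁ = v₂ :=
    R0 cs J hminv hbv1 hbv2 hlv1 hlv2 (mul_mem (inv_mem hw₂mem) hw₁mem) hgv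
  have hw12 : w₁ = w₂ := by
    have h1 : w₁ * v₁ = w₂ * v₁ := by rw [← hy1, hy2, hveq]
    exact mul_right_cancel h1
  exact hzne (by rw [hz1eq, hz2eq, hw12])

/-- Main lemma, inductive form. -/
theorem main_aux : ∀ (n : ℕ) (u₂ u₁ : W), ℓ u₂ ≤ n → Ble cs u₁ u₂ → u₁ ≠ u₂ →
    ¬ InCoset cs J u₁ u₂ →
    ∃ u', Ble cs u₁ u' ∧ Ble cs u' u₂ ∧ ℓ u₂ = ℓ u' + 1 ∧ ¬ InCoset cs J u' u₂ := by
  intro n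
  induction n with
  | zero =>
    intro u₂ u₁ hn hle hne _
    have := Ble.length_lt cs hle hne
    omega
  | succ n ih =>
    intro u₂ u₁ hn hle hne hnc
    obtain ⟨x, hx1, hx2, hx3⟩ := chain_property cs hle hne
    by_cases hxc : InCoset cs J x u₂
    · have hune : u₁ ≠ x := fun h => hnc (h ▸ hxc)
      have hnc2 : ¬ InCoset cs J u₁ x := fun h => hnc (inCoset_trans cs J h hxc)
      obtain ⟨y, hy1, hy2, hy3, hy4⟩ := ih x u₁ (by omega) hx1 hune hnc2
      have hyu2 : ¬ InCoset cs J y u₂ := fun h => hy4 ((inCoset_congr cs J hxc).mpr h)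
      have hyble : Ble cs y u₂ := Ble.trans cs hy2 hx2
      have hgap : ℓ u₂ = ℓ y + 2 := by omega
      obtain ⟨z₁, z₂, hzne, ⟨ha1, hb1c, hc1⟩, ⟨ha2, hb2c, hc2⟩⟩ := two_middles cs hyble hgap
      have hpick : ∃ z, z ≠ x ∧ Ble cs y z ∧ Ble cs z u₂ ∧ ℓ z = ℓ y + 1 := by
        by_cases h : z₁ = x
        · exact ⟨z₂, fun hh => hzne (by rw [h, hh]), ha2, hb2c, hc2⟩
        · exact ⟨z₁, h, ha1, hb1c, hc1⟩
      obtain ⟨z, hzx, hza, hzb, hzc⟩ := hpick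
      by_cases hzcst : InCoset cs J z u₂
      · exfalso
        obtain ⟨v, hv, hvmin⟩ := exists_min_coset_rep cs J u₂
        exact no_two_covers cs J hv hvmin hzcst hxc hzx hyu2 hza hy2 hzc hy3
      · exact ⟨z, Ble.trans cs hy1 hza, hzb, by omega, hzcst⟩
    · exact ⟨x, hx1, hx2, hx3, hxc⟩

end CoxProof

/-- Let `(W,S)` be a Coxeter group, `J ⊆ S`, and `u₁ < u₂` in Bruhat
order with `u₁ ∉ W_J u₂`. Then there is `u'` with `u₁ ≤ u' ⋖ u₂` and `u' ∉ W_J u₂`. -/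
theorem exists_cocover_outside_coset {B : Type*} {W : Type*} [Group W] {M : CoxeterMatrix B}
    (cs : CoxeterSystem M W) (J : Set B) (u₁ u₂ : W)
    (hle : coxBruhatLe cs u₁ u₂) (hne : u₁ ≠ u₂)
    (hcoset : ¬ ∃ g ∈ Subgroup.closure (cs.simple '' J), u₁ = g * u₂) :
    ∃ u', coxBruhatLe cs u₁ u' ∧ coxCovBy cs u' u₂ ∧
      ¬ ∃ g ∈ Subgroup.closure (cs.simple '' J), u' = g * u₂ := by
  obtain ⟨u', h1, h2, h3, h4⟩ :=
    CoxProof.main_aux cs J (cs.length u₂) u₂ u₁ le_rfl hle hne hcoset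
  exact ⟨u', h1, ⟨h2, h3⟩, h4⟩
end
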